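/- Suppose F has a density f on [0,1] that is continuously differentiable with f′ absolutely continuous. Then for every 0 < a < 1/2 there exists a constant C > 0, depending only on f and a, such that for all positive integers m, sup_{x ∈ [a, 1−a]} |F^{(m)}(x) − F(x)| ≤ C/m. -/

import Mathlib

/-!
With `j = ⌊m x⌋`, the binomial distribution function `P(Bin(m, s) ≤ j)` is the Beta tail
`P(U > s)` for `U ~ Beta(j+1, m-j)`, so an integration by parts gives `F⁽ᵐ⁾(x) = 𝔼 F(U)`.
Expanding `F` to first order at `x`, with remainder `O((u - x)²)` because `f` is Lipschitz on
`[0,1]`, bounds the error by the Beta moments `|𝔼 U - x| ≤ 1/m` and `𝔼 (U - x)² ≤ 2/m`.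
-/

open MeasureTheory ProbabilityTheory Real

noncomputable section

/-- pmf of Binomial(m, s) at k. -/
def binomPMFr (m k : ℕ) (s : ℝ) : ℝ := (m.choose k : ℝ) * s ^ k * (1 - s) ^ (m - k)

/-- Law of ŝ = X/m where X ~ Binomial(m, s). -/
def binomLaw (m : ℕ) (s : ℝ) : Measure ℝ :=
  ∑ k ∈ Finset.range (m + 1), ENNReal.ofReal (binomPMFr m k s) • Measure.dirac ((k : ℝ) / m)

/-- Binomial-mixture law of ŝ where s ~ μ. -/
def mixLaw (μ : Measure ℝ) (m : ℕ) : Measure ℝ := μ.bind (binomLaw m)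

/-- CDF of a measure. -/
def cdfOf (μ : Measure ℝ) (x : ℝ) : ℝ := (μ (Set.Iic x)).toReal

/-- Distribution on `[0,1]` with Lebesgue density `f`. -/
def densityMeasure (f : ℝ → ℝ) : Measure ℝ :=
  (volume.restrict (Set.Icc (0:ℝ) 1)).withDensity fun x => ENNReal.ofReal (f x)

open Finset
open scoped NNReal

/-- The Beta(j+1, m-j) density; it is only meaningful for `j < m` (truncated subtraction). -/
def betaWeight (m j : ℕ) (t : ℝ) : ℝ := m * (m - 1).choose j * t ^ j * (1 - t) ^ (m - 1 - j)

@[fun_prop]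
lemma continuous_betaWeight (m j : ℕ) : Continuous (betaWeight m j) := by
  unfold betaWeight; fun_prop

lemma betaWeight_nonneg (m j : ℕ) {t : ℝ} (ht : t ∈ Set.Icc (0 : ℝ) 1) :
    0 ≤ betaWeight m j t := by
  have : 0 ≤ 1 - t := by linarith [ht.2]
  have := ht.1
  unfold betaWeight; positivity

lemma continuous_binomPMFr (m k : ℕ) : Continuous (binomPMFr m k) := by
  unfold binomPMFr; fun_prop

lemma binomPMFr_nonneg (m k : ℕ) {s : ℝ} (hs : s ∈ Set.Icc (0 : ℝ) 1) :
    0 ≤ binomPMFr m k s := by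
  have : 0 ≤ 1 - s := by linarith [hs.2]
  have := hs.1
  unfold binomPMFr; positivity

lemma hasDerivAt_binomPMFr_zero (m : ℕ) (s : ℝ) :
    HasDerivAt (binomPMFr m 0) (-betaWeight m 0 s) s := by
  have h := ((hasDerivAt_id' s).const_sub 1).fun_pow m
  have e : binomPMFr m 0 = fun u => (1 - u) ^ m := by ext u; simp [binomPMFr]
  rw [e]
  refine h.congr_deriv ?_
  simp [betaWeight]

lemma hasDerivAt_binomPMFr_succ (m k : ℕ) (s : ℝ) :
    HasDerivAt (binomPMFr m (k + 1)) (betaWeight m k s - betaWeight m (k + 1) s) s := by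
  rcases m with _ | n
  · have e : binomPMFr 0 (k + 1) = fun _ => 0 := by ext u; simp [binomPMFr]
    rw [e]
    simpa [betaWeight] using hasDerivAt_const s (0 : ℝ)
  have h := (((hasDerivAt_id' s).fun_pow (k + 1)).mul
    (((hasDerivAt_id' s).const_sub 1).fun_pow (n - k))).const_mul ((n + 1).choose (k + 1) : ℝ)
  have e : binomPMFr (n + 1) (k + 1) =
      fun u => ((n + 1).choose (k + 1) : ℝ) * (u ^ (k + 1) * (1 - u) ^ (n - k)) := by
    ext u; simp [binomPMFr, mul_assoc]
  have hk : ((n + 1).choose (k + 1) * (k + 1) : ℝ) = (n + 1) * n.choose k := by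
    exact_mod_cast (Nat.add_one_mul_choose_eq n k).symm
  have hnk : ((n + 1).choose (k + 1) * (n - k : ℕ) : ℝ) = (n + 1) * n.choose (k + 1) := by
    have := (Nat.choose_succ_right_eq (n + 1) (k + 1)).symm.trans
      (Nat.add_one_mul_choose_eq n (k + 1)).symm
    rw [Nat.add_sub_add_right] at this
    exact_mod_cast this
  rw [e]
  refine h.congr_deriv ?_
  simp only [betaWeight, Nat.add_sub_cancel, Nat.sub_sub, Nat.cast_add, Nat.cast_one]
  linear_combination
    s ^ k * (1 - s) ^ (n - k) * hk - s ^ (k + 1) * (1 - s) ^ (n - (k + 1)) * hnk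

lemma hasDerivAt_sum_binomPMFr (m j : ℕ) (s : ℝ) :
    HasDerivAt (fun u => ∑ k ∈ range (j + 1), binomPMFr m k u) (-betaWeight m j s) s := by
  induction j with
  | zero => simpa using hasDerivAt_binomPMFr_zero m s
  | succ j ih =>
    simp_rw [sum_range_succ _ (j + 1)]
    exact (ih.fun_add (hasDerivAt_binomPMFr_succ m j s)).congr_deriv (by ring)

lemma sum_binomPMFr_eq_integral_betaWeight {m j : ℕ} (hj : j < m) (s : ℝ) :
    ∑ k ∈ range (j + 1), binomPMFr m k s = ∫ t in s..1, betaWeight m j t := by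
  have hneg (u : ℝ) :
      HasDerivAt (fun u => -∑ k ∈ range (j + 1), binomPMFr m k u) (betaWeight m j u) u := by
    simpa using (hasDerivAt_sum_binomPMFr m j u).fun_neg
  rw [intervalIntegral.integral_eq_sub_of_hasDerivAt (fun u _ => hneg u)
    ((continuous_betaWeight m j).intervalIntegrable _ _)]
  have hone : ∑ k ∈ range (j + 1), binomPMFr m k 1 = 0 :=
    sum_eq_zero fun k hk => by
      have : m - k ≠ 0 := by have := mem_range.1 hk; omega
      simp [binomPMFr, zero_pow this]
  rw [hone]
  ring

lemma integral_betaWeight {m j : ℕ} (hj : j < m) : ∫ t in (0 : ℝ)..1, betaWeight m j t = 1 := by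
  rw [← sum_binomPMFr_eq_integral_betaWeight hj, sum_eq_single 0]
  · simp [binomPMFr]
  · intro k _ hk
    simp [binomPMFr, zero_pow hk]
  · simp

lemma mul_betaWeight (m j : ℕ) (t : ℝ) :
    t * betaWeight m j t = (j + 1) / (m + 1) * betaWeight (m + 1) (j + 1) t := by
  rw [div_mul_eq_mul_div, eq_div_iff (by positivity)]
  rcases m with _ | n
  · simp [betaWeight]
  have h : (((n + 1).choose (j + 1) : ℕ) * (j + 1) : ℝ) = (n + 1) * n.choose j := by
    exact_mod_cast (Nat.add_one_mul_choose_eq n j).symm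
  simp only [betaWeight, Nat.add_sub_cancel, Nat.add_sub_add_right, Nat.cast_add, Nat.cast_one]
  linear_combination -(n + 2) * t ^ (j + 1) * (1 - t) ^ (n - j) * h

lemma integral_mul_betaWeight {m j : ℕ} (hj : j < m) :
    ∫ t in (0 : ℝ)..1, t * betaWeight m j t = (j + 1) / (m + 1) := by
  simp_rw [mul_betaWeight, intervalIntegral.integral_const_mul,
    integral_betaWeight (by omega : j + 1 < m + 1), mul_one]

lemma integral_sq_mul_betaWeight {m j : ℕ} (hj : j < m) :
    ∫ t in (0 : ℝ)..1, t ^ 2 * betaWeight m j t = (j + 1) / (m + 1) * ((j + 2) / (m + 2)) := by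
  simp_rw [sq, mul_assoc, mul_betaWeight, mul_left_comm _ ((_ : ℝ) / _),
    intervalIntegral.integral_const_mul, integral_mul_betaWeight (by omega : j + 1 < m + 1)]
  push_cast
  ring

section moments

variable {m j : ℕ} {x : ℝ}

lemma integral_sub_mul_betaWeight (hj : j < m) :
    ∫ t in (0 : ℝ)..1, (t - x) * betaWeight m j t = (j + 1) / (m + 1) - x := by
  simp_rw [sub_mul]
  rw [intervalIntegral.integral_sub
      ((by fun_prop : Continuous fun t => t * betaWeight m j t).intervalIntegrable _ _)
      ((by fun_prop : Continuous fun t => x * betaWeight m j t).intervalIntegrable _ _),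
    intervalIntegral.integral_const_mul,
    integral_mul_betaWeight hj, integral_betaWeight hj, mul_one]

lemma integral_sq_sub_mul_betaWeight (hj : j < m) :
    ∫ t in (0 : ℝ)..1, (t - x) ^ 2 * betaWeight m j t
      = (j + 1) / (m + 1) * ((j + 2) / (m + 2)) - 2 * x * ((j + 1) / (m + 1)) + x ^ 2 := by
  have e : ∀ t, (t - x) ^ 2 * betaWeight m j t
      = t ^ 2 * betaWeight m j t - 2 * x * (t * betaWeight m j t) + x ^ 2 * betaWeight m j t :=
    fun t => by ring
  simp_rw [e]
  rw [intervalIntegral.integral_add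
      ((by fun_prop : Continuous fun t =>
        t ^ 2 * betaWeight m j t - 2 * x * (t * betaWeight m j t)).intervalIntegrable _ _)
      ((by fun_prop : Continuous fun t => x ^ 2 * betaWeight m j t).intervalIntegrable _ _),
    intervalIntegral.integral_sub
      ((by fun_prop : Continuous fun t => t ^ 2 * betaWeight m j t).intervalIntegrable _ _)
      ((by fun_prop : Continuous fun t => 2 * x * (t * betaWeight m j t)).intervalIntegrable _ _),
    intervalIntegral.integral_const_mul, intervalIntegral.integral_const_mul,
    integral_sq_mul_betaWeight hj, integral_mul_betaWeight hj, integral_betaWeight hj, mul_one]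

variable (hj : j < m) (hjx : (j : ℝ) ≤ m * x) (hxj : m * x < j + 1)
include hj hjx hxj

lemma abs_integral_sub_mul_betaWeight_le :
    |∫ t in (0 : ℝ)..1, (t - x) * betaWeight m j t| ≤ 1 / m := by
  have hm : (0 : ℝ) < m := by exact_mod_cast (Nat.zero_le j).trans_lt hj
  have hjm : (j : ℝ) + 1 ≤ m := by exact_mod_cast hj
  have hx0 : 0 ≤ x := by nlinarith [(Nat.cast_nonneg j : (0 : ℝ) ≤ j)]
  have hx1 : x < 1 := by nlinarith
  have hnum : |(j + 1) - (m + 1) * x| ≤ 1 := abs_le.2 ⟨by nlinarith, by nlinarith⟩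
  have e : (j + 1) / (m + 1) - x = ((j + 1) - (m + 1) * x) / (m + 1) := by field_simp
  rw [integral_sub_mul_betaWeight hj, e, abs_div, abs_of_pos (by positivity : (0 : ℝ) < m + 1)]
  calc |(j + 1) - (m + 1) * x| / (m + 1) ≤ 1 / (m + 1) := by gcongr
    _ ≤ 1 / m := by gcongr; linarith

lemma integral_sq_sub_mul_betaWeight_le :
    ∫ t in (0 : ℝ)..1, (t - x) ^ 2 * betaWeight m j t ≤ 2 / m := by
  have hm : (0 : ℝ) < m := by exact_mod_cast (Nat.zero_le j).trans_lt hj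
  have hjm : (j : ℝ) + 1 ≤ m := by exact_mod_cast hj
  have hmean := abs_integral_sub_mul_betaWeight_le hj hjx hxj
  rw [integral_sub_mul_betaWeight hj] at hmean
  -- variance of the Beta law plus squared bias
  have e : (j + 1) / (m + 1) * ((j + 2) / (m + 2)) - 2 * x * ((j + 1) / (m + 1)) + x ^ 2
      = (j + 1) * (m - j) / ((m + 1) ^ 2 * (m + 2)) + ((j + 1) / (m + 1) - x) ^ 2 := by
    field_simp
    ring
  have hvar : (j + 1) * (m - j) / ((m + 1) ^ 2 * (m + 2)) ≤ 1 / (m : ℝ) := by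
    have hmj : (m : ℝ) - j ≤ m := by linarith [(Nat.cast_nonneg j : (0 : ℝ) ≤ j)]
    have hprod : ((j : ℝ) + 1) * (m - j) ≤ m * m :=
      mul_le_mul hjm hmj (by linarith) hm.le
    rw [div_le_div_iff₀ (by positivity) hm]
    nlinarith
  have hbias : ((j + 1) / (m + 1) - x) ^ 2 ≤ 1 / (m : ℝ) := by
    have h1 : 1 / (m : ℝ) ≤ 1 := by rw [div_le_one hm]; linarith
    calc ((j + 1) / (m + 1) - x) ^ 2 = |(j + 1) / (m + 1) - x| ^ 2 := (sq_abs _).symm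
      _ ≤ (1 / m) ^ 2 := pow_le_pow_left₀ (abs_nonneg _) hmean 2
      _ ≤ 1 / m := by nlinarith [one_div_nonneg.2 hm.le]
  rw [integral_sq_sub_mul_betaWeight hj, e, show (2 : ℝ) / m = 1 / m + 1 / m by ring]
  exact add_le_add hvar hbias

end moments

lemma integral_mul_integral_eq_integral_integral_mul {f g : ℝ → ℝ} (hf : Continuous f)
    (hg : Continuous g) (a b : ℝ) :
    ∫ s in a..b, f s * ∫ t in s..b, g t = ∫ u in a..b, (∫ s in a..u, f s) * g u := by
  have hG (s : ℝ) : HasDerivAt (fun s => ∫ t in s..b, g t) (-g s) s :=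
    intervalIntegral.integral_hasDerivAt_left (hg.intervalIntegrable _ _)
      (hg.stronglyMeasurableAtFilter _ _) hg.continuousAt
  have hF (u : ℝ) : HasDerivAt (fun u => ∫ s in a..u, f s) (f u) u :=
    (hf.integral_hasStrictDerivAt a u).hasDerivAt
  have hibp := intervalIntegral.integral_mul_deriv_eq_deriv_mul (fun s _ => hG s)
    (fun u _ => hF u) (hg.neg.intervalIntegrable a b) (hf.intervalIntegrable a b)
  simp only [intervalIntegral.integral_same, mul_zero, zero_mul, sub_zero, neg_mul,
    intervalIntegral.integral_neg, zero_sub, neg_neg] at hibp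
  simp_rw [mul_comm (f _), hibp, mul_comm (g _)]

lemma LipschitzOnWith.abs_integral_sub_mul_sub_le {f : ℝ → ℝ} {K : ℝ≥0} {x t : ℝ}
    (hf : LipschitzOnWith K f (Set.uIcc x t)) :
    |(∫ u in x..t, f u) - f x * (t - x)| ≤ K * (t - x) ^ 2 := by
  have hint : IntervalIntegrable f volume x t := hf.continuousOn.intervalIntegrable
  have hbound : ∀ u ∈ Set.uIoc x t, ‖f u - f x‖ ≤ K * |t - x| := by
    intro u hu
    have hu' := Set.uIoc_subset_uIcc hu
    calc ‖f u - f x‖ = dist (f u) (f x) := (dist_eq_norm _ _).symm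
      _ ≤ K * dist u x := hf.dist_le_mul u hu' x Set.left_mem_uIcc
      _ ≤ K * |t - x| := by
        gcongr
        rw [Real.dist_eq]
        exact Set.abs_sub_left_of_mem_uIcc hu'
  have h := intervalIntegral.norm_integral_le_of_norm_le_const hbound
  rw [intervalIntegral.integral_sub hint intervalIntegrable_const, intervalIntegral.integral_const,
    smul_eq_mul, Real.norm_eq_abs] at h
  calc |(∫ u in x..t, f u) - f x * (t - x)| ≤ K * |t - x| * |t - x| := by
        rwa [mul_comm (f x)]
    _ = K * (t - x) ^ 2 := by rw [mul_assoc, ← abs_mul, ← sq, abs_sq]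

lemma abs_integral_mul_sub_le {F w : ℝ → ℝ} {a b x c K : ℝ} (hab : a ≤ b) (hF : Continuous F)
    (hw : Continuous w) (hw0 : ∀ u ∈ Set.Icc a b, 0 ≤ w u) (hw1 : ∫ u in a..b, w u = 1)
    (hR : ∀ u ∈ Set.Icc a b, |F u - F x - c * (u - x)| ≤ K * (u - x) ^ 2) :
    |(∫ u in a..b, F u * w u) - F x|
      ≤ |c| * |∫ u in a..b, (u - x) * w u| + K * ∫ u in a..b, (u - x) ^ 2 * w u := by
  set R : ℝ → ℝ := fun u => F u - F x - c * (u - x)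
  have hsplit : (∫ u in a..b, F u * w u) - F x
      = c * (∫ u in a..b, (u - x) * w u) + ∫ u in a..b, R u * w u := by
    have e : ∀ u, F u * w u = F x * w u + (c * ((u - x) * w u) + R u * w u) := fun u => by ring
    simp_rw [e]
    rw [intervalIntegral.integral_add
        ((by fun_prop : Continuous fun u => F x * w u).intervalIntegrable _ _)
        ((by fun_prop : Continuous fun u =>
          c * ((u - x) * w u) + R u * w u).intervalIntegrable _ _),
      intervalIntegral.integral_add
        ((by fun_prop : Continuous fun u => c * ((u - x) * w u)).intervalIntegrable _ _)
        ((by fun_prop : Continuous fun u => R u * w u).intervalIntegrable _ _),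
      intervalIntegral.integral_const_mul, intervalIntegral.integral_const_mul, hw1]
    ring
  have hrem : |∫ u in a..b, R u * w u| ≤ K * ∫ u in a..b, (u - x) ^ 2 * w u := by
    calc |∫ u in a..b, R u * w u| ≤ ∫ u in a..b, |R u * w u| :=
          intervalIntegral.abs_integral_le_integral_abs hab
      _ ≤ ∫ u in a..b, K * ((u - x) ^ 2 * w u) := by
          refine intervalIntegral.integral_mono_on hab ?_ ?_ fun u hu => ?_
          · exact (by fun_prop : Continuous fun u => |R u * w u|).intervalIntegrable _ _
          · exact (by fun_prop : Continuous fun u =>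
              K * ((u - x) ^ 2 * w u)).intervalIntegrable _ _
          rw [abs_mul, abs_of_nonneg (hw0 u hu), ← mul_assoc]
          exact mul_le_mul_of_nonneg_right (hR u hu) (hw0 u hu)
      _ = K * ∫ u in a..b, (u - x) ^ 2 * w u := intervalIntegral.integral_const_mul _ _
  rw [hsplit]
  calc _ ≤ |c * ∫ u in a..b, (u - x) * w u| + |∫ u in a..b, R u * w u| := abs_add_le _ _
    _ ≤ _ := by rw [abs_mul]; gcongr

lemma binomLaw_apply (m : ℕ) (s : ℝ) {A : Set ℝ} (hA : MeasurableSet A) :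
    binomLaw m s A = ∑ k ∈ range (m + 1),
      ENNReal.ofReal (binomPMFr m k s) * A.indicator 1 ((k : ℝ) / m) := by
  rw [binomLaw, Measure.finsetSum_apply]
  refine sum_congr rfl fun k _ => ?_
  rw [Measure.smul_apply, Measure.dirac_apply' _ hA, smul_eq_mul]

lemma measurable_binomLaw (m : ℕ) : Measurable (binomLaw m) := by
  refine Measure.measurable_of_measurable_coe _ fun A hA => ?_
  simp_rw [binomLaw_apply m _ hA]
  exact Finset.measurable_sum _ fun k _ =>
    (ENNReal.measurable_ofReal.comp (continuous_binomPMFr m k).measurable).mul_const _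

lemma cdfOf_densityMeasure {f : ℝ → ℝ} (hf0 : ∀ x, 0 ≤ f x)
    (hf : IntegrableOn f (Set.Icc 0 1)) {x : ℝ} (hx0 : 0 ≤ x) (hx1 : x ≤ 1) :
    cdfOf (densityMeasure f) x = ∫ s in (0 : ℝ)..x, f s := by
  have hIcc : Set.Iic x ∩ Set.Icc 0 1 = Set.Icc 0 x := by
    ext t
    simp only [Set.mem_inter_iff, Set.mem_Iic, Set.mem_Icc]
    constructor
    · rintro ⟨htx, ht0, -⟩; exact ⟨ht0, htx⟩
    · rintro ⟨ht0, htx⟩; exact ⟨htx, ht0, htx.trans hx1⟩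
  rw [cdfOf, densityMeasure, withDensity_apply _ measurableSet_Iic,
    Measure.restrict_restrict measurableSet_Iic, hIcc,
    ← ofReal_integral_eq_lintegral_ofReal (hf.mono_set (Set.Icc_subset_Icc_right hx1))
      (Filter.Eventually.of_forall hf0),
    ENNReal.toReal_ofReal (setIntegral_nonneg measurableSet_Icc fun s _ => hf0 s),
    integral_Icc_eq_integral_Ioc, ← intervalIntegral.integral_of_le hx0]

section cdf

variable {m j : ℕ} {x : ℝ} (hj : j < m) (hjx : (j : ℝ) ≤ m * x) (hxj : m * x < j + 1)
include hj hjx hxj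

lemma binomLaw_Iic {s : ℝ} (hs : s ∈ Set.Icc (0 : ℝ) 1) :
    binomLaw m s (Set.Iic x) = ENNReal.ofReal (∑ k ∈ range (j + 1), binomPMFr m k s) := by
  have hm : (0 : ℝ) < m := by exact_mod_cast (Nat.zero_le j).trans_lt hj
  have hfilter : {k ∈ range (m + 1) | ((k : ℕ) : ℝ) / m ≤ x} = range (j + 1) := by
    ext k
    simp only [mem_filter, mem_range, div_le_iff₀ hm, mul_comm x]
    constructor
    · rintro ⟨-, hk⟩
      exact_mod_cast hk.trans_lt hxj
    · intro hk
      refine ⟨by omega, le_trans ?_ hjx⟩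
      exact_mod_cast Nat.lt_succ_iff.1 hk
  simp_rw [binomLaw_apply _ _ measurableSet_Iic, Set.indicator_apply, Set.mem_Iic, Pi.one_apply,
    mul_ite, mul_one, mul_zero]
  rw [← sum_filter, hfilter,
    ENNReal.ofReal_sum_of_nonneg fun k _ => binomPMFr_nonneg m k hs]

lemma cdfOf_mixLaw_densityMeasure {f : ℝ → ℝ} (hf0 : ∀ x, 0 ≤ f x) (hf : Continuous f) :
    cdfOf (mixLaw (densityMeasure f) m) x
      = ∫ s in (0 : ℝ)..1, f s * ∑ k ∈ range (j + 1), binomPMFr m k s := by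
  have hA0 (s : ℝ) (hs : s ∈ Set.Icc (0 : ℝ) 1) :
      0 ≤ f s * ∑ k ∈ range (j + 1), binomPMFr m k s :=
    mul_nonneg (hf0 s) (sum_nonneg fun k _ => binomPMFr_nonneg m k hs)
  have hcont : Continuous fun s => f s * ∑ k ∈ range (j + 1), binomPMFr m k s :=
    hf.mul (continuous_finsetSum _ fun k _ => continuous_binomPMFr m k)
  have hdens : Measurable fun s => ENNReal.ofReal (f s) :=
    ENNReal.measurable_ofReal.comp hf.measurable
  have hbin : Measurable fun s => binomLaw m s (Set.Iic x) :=
    (Measure.measurable_coe measurableSet_Iic).comp (measurable_binomLaw m)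
  rw [cdfOf, mixLaw, Measure.bind_apply measurableSet_Iic (measurable_binomLaw m).aemeasurable,
    densityMeasure, lintegral_withDensity_eq_lintegral_mul _ hdens hbin,
    setLIntegral_congr_fun measurableSet_Icc fun s hs => by
      rw [Pi.mul_apply, binomLaw_Iic hj hjx hxj hs, ← ENNReal.ofReal_mul (hf0 s)],
    ← ofReal_integral_eq_lintegral_ofReal hcont.integrableOn_Icc
      ((ae_restrict_iff' measurableSet_Icc).2 (Filter.Eventually.of_forall hA0)),
    ENNReal.toReal_ofReal (setIntegral_nonneg measurableSet_Icc hA0),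
    integral_Icc_eq_integral_Ioc, ← intervalIntegral.integral_of_le zero_le_one]

/-- Integration by parts against the Beta tail: `F⁽ᵐ⁾(x) = 𝔼 F(U)`, `U ~ Beta(j+1, m-j)`. -/
lemma cdfOf_mixLaw_densityMeasure_eq_integral_betaWeight {f : ℝ → ℝ} (hf0 : ∀ x, 0 ≤ f x)
    (hf : Continuous f) :
    cdfOf (mixLaw (densityMeasure f) m) x
      = ∫ u in (0 : ℝ)..1, (∫ s in (0 : ℝ)..u, f s) * betaWeight m j u := by
  rw [cdfOf_mixLaw_densityMeasure hj hjx hxj hf0 hf]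
  simp_rw [sum_binomPMFr_eq_integral_betaWeight hj]
  exact integral_mul_integral_eq_integral_integral_mul hf (continuous_betaWeight m j) 0 1

end cdf

lemma abs_cdfOf_mixLaw_sub_cdfOf_le {f : ℝ → ℝ} {B : ℝ} {K : ℝ≥0} (hf0 : ∀ x, 0 ≤ f x)
    (hf : Continuous f) (hB : ∀ u ∈ Set.Icc (0 : ℝ) 1, ‖f u‖ ≤ B)
    (hK : LipschitzOnWith K f (Set.Icc 0 1)) {m : ℕ} (hm : 1 ≤ m) {x : ℝ}
    (hx : x ∈ Set.Ico (0 : ℝ) 1) :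
    |cdfOf (mixLaw (densityMeasure f) m) x - cdfOf (densityMeasure f) x|
      ≤ (B + 2 * K) / m := by
  have hm' : (0 : ℝ) < m := by exact_mod_cast hm
  set j := ⌊(m : ℝ) * x⌋₊
  have hjx : (j : ℝ) ≤ m * x := Nat.floor_le (by nlinarith [hx.1])
  have hxj : (m : ℝ) * x < j + 1 := Nat.lt_floor_add_one _
  have hj : j < m := by
    rw [Nat.floor_lt (by nlinarith [hx.1])]
    nlinarith [hx.2]
  have hx' : x ∈ Set.Icc (0 : ℝ) 1 := Set.Ico_subset_Icc_self hx
  set F := fun u => ∫ s in (0 : ℝ)..u, f s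
  have hR : ∀ u ∈ Set.Icc (0 : ℝ) 1, |F u - F x - f x * (u - x)| ≤ K * (u - x) ^ 2 := by
    intro u hu
    rw [intervalIntegral.integral_interval_sub_left (hf.intervalIntegrable _ _)
      (hf.intervalIntegrable _ _)]
    exact (hK.mono (Set.uIcc_subset_Icc hx' hu)).abs_integral_sub_mul_sub_le
  have hB0 : 0 ≤ B := (norm_nonneg _).trans (hB x hx')
  rw [cdfOf_mixLaw_densityMeasure_eq_integral_betaWeight hj hjx hxj hf0 hf,
    cdfOf_densityMeasure hf0 hf.integrableOn_Icc hx'.1 hx'.2]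
  calc _ ≤ |f x| * |∫ u in (0 : ℝ)..1, (u - x) * betaWeight m j u|
        + K * ∫ u in (0 : ℝ)..1, (u - x) ^ 2 * betaWeight m j u :=
        abs_integral_mul_sub_le zero_le_one (intervalIntegral.continuous_primitive
          (fun _ _ => hf.intervalIntegrable _ _) 0) (continuous_betaWeight m j)
          (fun u hu => betaWeight_nonneg m j hu) (integral_betaWeight hj) hR
    _ ≤ B * (1 / m) + K * (2 / m) := by
        gcongr
        · exact hB x hx'
        · exact abs_integral_sub_mul_betaWeight_le hj hjx hxj
        · exact integral_sq_sub_mul_betaWeight_le hj hjx hxj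
    _ = (B + 2 * K) / m := by ring

theorem stmt8_general (f : ℝ → ℝ)
    (hf0 : ∀ x, 0 ≤ f x)
    (hC1 : ContDiff ℝ 1 f)
    (a : ℝ) (ha0 : 0 < a) (ha1 : a < 1/2) :
    ∃ C : ℝ, 0 < C ∧ ∀ m : ℕ, 1 ≤ m →
      (⨆ x : Set.Icc a (1 - a),
          |cdfOf (mixLaw (densityMeasure f) m) x - cdfOf (densityMeasure f) x|)
        ≤ C / m := by
  have hf := hC1.continuous
  obtain ⟨B, hB⟩ := isCompact_Icc.exists_bound_of_continuousOn hf.continuousOn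
  obtain ⟨K, hK⟩ :=
    hC1.locallyLipschitz.locallyLipschitzOn.exists_lipschitzOnWith_of_compact isCompact_Icc
  refine ⟨|B| + 2 * K + 1, by positivity, fun m hm => ?_⟩
  have : Nonempty (Set.Icc a (1 - a)) := ⟨⟨a, le_rfl, by linarith⟩⟩
  refine ciSup_le fun ⟨x, hx⟩ => ?_
  calc _ ≤ (B + 2 * K) / m := abs_cdfOf_mixLaw_sub_cdfOf_le hf0 hf hB hK hm
        ⟨by linarith [hx.1], by linarith [hx.2]⟩
    _ ≤ (|B| + 2 * K + 1) / m := by gcongr ?_ / _; linarith [le_abs_self B]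

/-- If `F` has a continuously differentiable density `f` on `[0,1]` whose
derivative `f'` is absolutely continuous, then for every `0 < a < 1/2` there is a
constant `C > 0` (depending only on `f` and `a`) such that for all positive integers `m`,
`sup_{x ∈ [a, 1−a]} |F^{(m)}(x) − F(x)| ≤ C/m`. -/
theorem stmt8 (f : ℝ → ℝ)
    (hf0 : ∀ x, 0 ≤ f x) (hdens : ∫ x in Set.Icc (0:ℝ) 1, f x = 1)
    (hC1 : ContDiff ℝ 1 f)
    -- `f'` is absolutely continuous on `[0,1]`: it is an indefinite integral of an
    -- integrable function `g`.
    (hAC : ∃ g : ℝ → ℝ, IntegrableOn g (Set.Icc (0:ℝ) 1) volume ∧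
      ∀ x ∈ Set.Icc (0:ℝ) 1, deriv f x = deriv f 0 + ∫ t in (0:ℝ)..x, g t)
    (a : ℝ) (ha0 : 0 < a) (ha1 : a < 1/2) :
    ∃ C : ℝ, 0 < C ∧ ∀ m : ℕ, 1 ≤ m →
      (⨆ x : Set.Icc a (1 - a),
          |cdfOf (mixLaw (densityMeasure f) m) x - cdfOf (densityMeasure f) x|)
        ≤ C / m :=
  stmt8_general f hf0 hC1 a ha0 ha1
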